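/- Let d ≥ 1, let S ⊆ ℝ^d be a bounded set, let T > 0, let 1 ≤ q < p, let α ∈ (0,1], let β satisfy 0 < β ≤ α/p, and let N, B ≥ 0. Let v : (0,T] → (ℝ^d → ℝ) be a family of functions such that for every t ∈ (0,T]: (a) |v(t)(x)| ≤ N for all x ∈ S, and (b) v(t) is α-Hölder with constant B·(1 + 1/t) on S. Define ‖u‖_{C^β(S)} := sup_{x ∈ S} |u(x)| + sup{ |u(x) − u(y)| / |x − y|^β : x, y ∈ S, x ≠ y }, and assume the function t ↦ ‖v(t)‖_{C^β(S)} is measurable on (0,T]. Then ∫₀^T ‖v(t)‖_{C^β(S)}^q dt < ∞; moreover, for every t ∈ (0,T], ‖v(t)‖_{C^β(S)} ≤ (2N)^{1−1/p}·(diam S)^{α/p−β}·(B·(1 + 1/t))^{1/p} + N. -/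
import Mathlib


/-- The `C^β(S)` norm of a function: supremum norm over `S` plus the `β`-Hölder
seminorm over `S`. -/
noncomputable def cBetaNorm {d : ℕ} (β : ℝ) (S : Set (EuclideanSpace ℝ (Fin d)))
    (u : EuclideanSpace ℝ (Fin d) → ℝ) : ℝ :=
  (⨆ x ∈ S, |u x|) +
    sSup {c : ℝ | ∃ x ∈ S, ∃ y ∈ S, x ≠ y ∧ c = |u x - u y| / dist x y ^ β}

lemma cBetaNorm_nonneg {d : ℕ} (β : ℝ) (S : Set (EuclideanSpace ℝ (Fin d)))
    (u : EuclideanSpace ℝ (Fin d) → ℝ) : 0 ≤ cBetaNorm β S u := by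
  apply add_nonneg
  · exact Real.iSup_nonneg fun x => Real.iSup_nonneg fun _ => abs_nonneg _
  · refine Real.sSup_nonneg fun c hc => ?_
    obtain ⟨x, hx, y, hy, hxy, rfl⟩ := hc
    positivity

/-- Quantitative core of Theorem 3.5: a uniform bound `|v(t)| ≤ N` on `S` together
with an `α`-Hölder bound with constant `B (1 + 1/t)` yields, for `0 < β ≤ α/p` and
`q < p`, that `t ↦ ‖v(t)‖_{C^β(S)}` is `q`-integrable on `(0,T]`, with the pointwise
bound `‖v(t)‖_{C^β(S)} ≤ (2N)^{1-1/p} (diam S)^{α/p-β} (B(1+1/t))^{1/p} + N`. -/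
theorem stmt_12 (d : ℕ) (hd : 1 ≤ d) (S : Set (EuclideanSpace ℝ (Fin d)))
    (hS : Bornology.IsBounded S) (T : ℝ) (hT : 0 < T)
    (q p α β N B : ℝ) (hq : 1 ≤ q) (hqp : q < p)
    (hα0 : 0 < α) (hα1 : α ≤ 1) (hβ0 : 0 < β) (hβ : β ≤ α / p)
    (hN : 0 ≤ N) (hB : 0 ≤ B)
    (v : ℝ → EuclideanSpace ℝ (Fin d) → ℝ)
    (hbound : ∀ t ∈ Set.Ioc 0 T, ∀ x ∈ S, |v t x| ≤ N)
    (hHolder : ∀ t ∈ Set.Ioc 0 T, ∀ x ∈ S, ∀ y ∈ S,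
      |v t x - v t y| ≤ B * (1 + 1 / t) * dist x y ^ α)
    (hmeas : AEMeasurable (fun t => cBetaNorm β S (v t))
      (MeasureTheory.volume.restrict (Set.Ioc 0 T))) :
    MeasureTheory.IntegrableOn (fun t => cBetaNorm β S (v t) ^ q)
        (Set.Ioc 0 T) ∧
      ∀ t ∈ Set.Ioc 0 T,
        cBetaNorm β S (v t) ≤
          (2 * N) ^ (1 - 1 / p) * Metric.diam S ^ (α / p - β)
            * (B * (1 + 1 / t)) ^ (1 / p) + N := by
  have hp1 : 1 < p := lt_of_le_of_lt hq hqp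
  have hp0 : 0 < p := lt_trans one_pos hp1
  have h1p0 : 0 < 1 / p := by positivity
  have h1p1 : 1 / p ≤ 1 := by
    rw [div_le_one hp0]; exact le_of_lt hp1
  have hsub : (0:ℝ) ≤ 1 - 1 / p := by linarith
  have hαβ : (0:ℝ) ≤ α / p - β := by linarith
  set A : ℝ := (2 * N) ^ (1 - 1 / p) * Metric.diam S ^ (α / p - β) with hA
  have hA0 : 0 ≤ A := by
    apply mul_nonneg <;> exact Real.rpow_nonneg (by positivity) _
  -- key pointwise bound
  have key : ∀ t ∈ Set.Ioc 0 T,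
      cBetaNorm β S (v t) ≤ A * (B * (1 + 1 / t)) ^ (1 / p) + N := by
    intro t ht
    have htpos : 0 < t := ht.1
    have hK0 : (0:ℝ) ≤ B * (1 + 1 / t) := by positivity
    have hRHS0 : (0:ℝ) ≤ A * (B * (1 + 1 / t)) ^ (1 / p) :=
      mul_nonneg hA0 (Real.rpow_nonneg hK0 _)
    unfold cBetaNorm
    rw [add_comm (A * _) N]
    apply add_le_add
    · -- sup part
      refine Real.iSup_le (fun x => Real.iSup_le (fun hx => hbound t ht x hx) hN) hN
    · -- seminorm part
      refine Real.sSup_le ?_ hRHS0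
      rintro c ⟨x, hx, y, hy, hxy, rfl⟩
      set δ := dist x y with hδdef
      have hδ : 0 < δ := dist_pos.2 hxy
      set a := |v t x - v t y| with hadef
      have ha0 : 0 ≤ a := abs_nonneg _
      have ha2N : a ≤ 2 * N := by
        calc a ≤ |v t x| + |v t y| := abs_sub _ _
          _ ≤ N + N := add_le_add (hbound t ht x hx) (hbound t ht y hy)
          _ = 2 * N := by ring
      have haK : a ≤ B * (1 + 1 / t) * δ ^ α := hHolder t ht x hx y hy
      have hdiam : δ ≤ Metric.diam S := Metric.dist_le_diam_of_mem hS hx hy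
      -- interpolation
      have hmain : a ≤ A * (B * (1 + 1 / t)) ^ (1 / p) * δ ^ β := by
        rcases eq_or_lt_of_le ha0 with h0 | hapos
        · rw [← h0]
          positivity
        · have step1 : a = a ^ (1 - 1 / p) * a ^ (1 / p) := by
            rw [← Real.rpow_add hapos, sub_add_cancel, Real.rpow_one]
          have step2 : a ^ (1 - 1 / p) ≤ (2 * N) ^ (1 - 1 / p) :=
            Real.rpow_le_rpow ha0 ha2N hsub
          have step3 : a ^ (1 / p) ≤ (B * (1 + 1 / t)) ^ (1 / p) * δ ^ (α / p) := by
            calc a ^ (1 / p) ≤ (B * (1 + 1 / t) * δ ^ α) ^ (1 / p) :=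
                  Real.rpow_le_rpow ha0 haK (le_of_lt h1p0)
              _ = (B * (1 + 1 / t)) ^ (1 / p) * (δ ^ α) ^ (1 / p) :=
                  Real.mul_rpow hK0 (Real.rpow_nonneg hδ.le _)
              _ = (B * (1 + 1 / t)) ^ (1 / p) * δ ^ (α / p) := by
                  rw [← Real.rpow_mul hδ.le]
                  ring_nf
          have step4 : δ ^ (α / p) = δ ^ (α / p - β) * δ ^ β := by
            rw [← Real.rpow_add hδ, sub_add_cancel]
          have step5 : δ ^ (α / p - β) ≤ Metric.diam S ^ (α / p - β) :=
            Real.rpow_le_rpow hδ.le hdiam hαβ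
          calc a = a ^ (1 - 1 / p) * a ^ (1 / p) := step1
            _ ≤ (2 * N) ^ (1 - 1 / p) * ((B * (1 + 1 / t)) ^ (1 / p) * δ ^ (α / p)) := by
                apply mul_le_mul step2 step3 (Real.rpow_nonneg ha0 _)
                  (Real.rpow_nonneg (by positivity) _)
            _ = (2 * N) ^ (1 - 1 / p) * ((B * (1 + 1 / t)) ^ (1 / p)
                  * (δ ^ (α / p - β) * δ ^ β)) := by rw [step4]
            _ ≤ (2 * N) ^ (1 - 1 / p) * ((B * (1 + 1 / t)) ^ (1 / p)
                  * (Metric.diam S ^ (α / p - β) * δ ^ β)) := by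
                apply mul_le_mul_of_nonneg_left _ (Real.rpow_nonneg (by positivity) _)
                apply mul_le_mul_of_nonneg_left _ (Real.rpow_nonneg hK0 _)
                exact mul_le_mul_of_nonneg_right step5 (Real.rpow_nonneg hδ.le _)
            _ = A * (B * (1 + 1 / t)) ^ (1 / p) * δ ^ β := by rw [hA]; ring
      rw [div_le_iff₀ (Real.rpow_pos_of_pos hδ β)]
      exact hmain
  refine ⟨?_, key⟩
  -- integrability
  set c₁ : ℝ := A * B ^ (1 / p) + N with hc₁
  have hc₁0 : 0 ≤ c₁ := by positivity
  set D : ℝ := c₁ ^ q * (T + 1) ^ (q / p) with hD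
  have hD0 : 0 ≤ D := by positivity
  have hqp0 : 0 ≤ q / p := by positivity
  have hbd : ∀ t ∈ Set.Ioc 0 T, cBetaNorm β S (v t) ^ q ≤ D * t ^ (-(q / p)) := by
    intro t ht
    have htpos : 0 < t := ht.1
    have h1t : (1:ℝ) ≤ 1 + 1 / t := by
      have : 0 < 1 / t := by positivity
      linarith
    have h1t0 : (0:ℝ) ≤ 1 + 1 / t := by linarith
    have hrpow1 : (1:ℝ) ≤ (1 + 1 / t) ^ (1 / p) := Real.one_le_rpow h1t h1p0.le
    have step : cBetaNorm β S (v t) ≤ c₁ * (1 + 1 / t) ^ (1 / p) := by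
      calc cBetaNorm β S (v t) ≤ A * (B * (1 + 1 / t)) ^ (1 / p) + N := key t ht
        _ = A * (B ^ (1 / p) * (1 + 1 / t) ^ (1 / p)) + N := by
            rw [Real.mul_rpow hB h1t0]
        _ ≤ A * (B ^ (1 / p) * (1 + 1 / t) ^ (1 / p))
              + N * (1 + 1 / t) ^ (1 / p) := by nlinarith
        _ = c₁ * (1 + 1 / t) ^ (1 / p) := by rw [hc₁]; ring
    have hT1 : 1 + 1 / t ≤ (T + 1) / t := by
      rw [le_div_iff₀ htpos]
      have he : (1 + 1 / t) * t = t + 1 := by field_simp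
      rw [he]
      linarith [ht.2]
    have step2 : cBetaNorm β S (v t) ^ q ≤ (c₁ * (1 + 1 / t) ^ (1 / p)) ^ q :=
      Real.rpow_le_rpow (cBetaNorm_nonneg β S (v t)) step (by linarith)
    calc cBetaNorm β S (v t) ^ q ≤ (c₁ * (1 + 1 / t) ^ (1 / p)) ^ q := step2
      _ = c₁ ^ q * (1 + 1 / t) ^ (q / p) := by
          rw [Real.mul_rpow hc₁0 (Real.rpow_nonneg h1t0 _), ← Real.rpow_mul h1t0]
          ring_nf
      _ ≤ c₁ ^ q * ((T + 1) / t) ^ (q / p) := by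
          apply mul_le_mul_of_nonneg_left _ (Real.rpow_nonneg hc₁0 _)
          exact Real.rpow_le_rpow h1t0 hT1 hqp0
      _ = D * t ^ (-(q / p)) := by
          rw [hD, Real.div_rpow (by linarith) htpos.le, Real.rpow_neg htpos.le,
            div_eq_mul_inv]
          ring
  have hint : MeasureTheory.IntegrableOn (fun t => D * t ^ (-(q / p)))
      (Set.Ioc 0 T) := by
    apply MeasureTheory.Integrable.const_mul
    have hlt : -1 < -(q / p) := by
      have : q / p < 1 := (div_lt_one hp0).2 hqp
      linarith
    exact (intervalIntegrable_iff_integrableOn_Ioc_of_le hT.le).1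
      (intervalIntegral.intervalIntegrable_rpow' hlt)
  refine MeasureTheory.Integrable.mono' hint
    ((hmeas.pow_const q).aestronglyMeasurable) ?_
  rw [MeasureTheory.ae_restrict_iff' measurableSet_Ioc]
  filter_upwards with t ht
  rw [Real.norm_eq_abs, abs_of_nonneg (Real.rpow_nonneg (cBetaNorm_nonneg β S (v t)) q)]
  exact hbd t ht
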